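/- Let λ and T be real numbers with e^{−1} < λ < 1 and T ≥ 0, and put N := 2 + 2 / (λ^T · (−ln λ)). Then: (1) 2 ≤ N; (2) 2·(T − v + λ^v) ≤ N·λ^v for all real v ≤ T; (3) v + N·λ^{v−w} ≤ N·λ^{−w} for all real v, w with 0 ≤ v ≤ w. -/
import Mathlib


/-- Lemma 7.5 (choice of `N`): for `e⁻¹ < λ < 1` and `T ≥ 0`, the number
`N = 2 + 2/(λ^T · (-ln λ))` satisfies the three stated inequalities.
Here `λ ^ v` denotes the real power `exp (v · ln λ)`. -/
theorem choice_of_N (lam T : ℝ) (hl : Real.exp (-1) < lam) (hl1 : lam < 1) (hT : 0 ≤ T) :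
    (2 ≤ 2 + 2 / (lam ^ T * (-Real.log lam))) ∧
    (∀ v : ℝ, v ≤ T →
      2 * (T - v + lam ^ v) ≤ (2 + 2 / (lam ^ T * (-Real.log lam))) * lam ^ v) ∧
    (∀ v w : ℝ, 0 ≤ v → v ≤ w →
      v + (2 + 2 / (lam ^ T * (-Real.log lam))) * lam ^ (v - w) ≤
        (2 + 2 / (lam ^ T * (-Real.log lam))) * lam ^ (-w)) := by
  have hlam0 : 0 < lam := lt_trans (Real.exp_pos _) hl
  set c : ℝ := -Real.log lam with hc
  have hc0 : 0 < c := by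
    have := Real.log_neg hlam0 hl1
    simp only [hc]; linarith
  clear_value c
  have hT1 : lam ^ T ≤ (1:ℝ) := Real.rpow_le_one hlam0.le hl1.le hT
  have hTpos : 0 < lam ^ T := Real.rpow_pos_of_pos hlam0 T
  have hA : 0 < lam ^ T * c := mul_pos hTpos hc0
  set N : ℝ := 2 + 2 / (lam ^ T * c) with hNdef
  clear_value N
  have hN2 : 2 ≤ N := by
    have : 0 ≤ 2 / (lam ^ T * c) := by positivity
    linarith
  have hN0 : (0:ℝ) < N := by linarith
  refine ⟨hN2, ?_, ?_⟩
  · intro v hv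
    have hkey : (T - v) * (lam ^ T * c) ≤ lam ^ v := by
      have h1 : (T - v) * c ≤ Real.exp ((T - v) * c) := by
        have := Real.add_one_le_exp ((T - v) * c); linarith
      have h2 : lam ^ v = lam ^ T * Real.exp ((T - v) * c) := by
        rw [Real.rpow_def_of_pos hlam0, Real.rpow_def_of_pos hlam0, ← Real.exp_add,
          Real.exp_eq_exp]
        simp only [hc]; ring
      calc (T - v) * (lam ^ T * c) = lam ^ T * ((T - v) * c) := by ring
        _ ≤ lam ^ T * Real.exp ((T - v) * c) := mul_le_mul_of_nonneg_left h1 hTpos.le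
        _ = lam ^ v := h2.symm
    have h3 : 2 * (T - v) ≤ (2 / (lam ^ T * c)) * lam ^ v := by
      rw [div_mul_eq_mul_div, le_div_iff₀ hA]; nlinarith
    rw [hNdef]; linarith
  · intro v w hv hvw
    have hvw0 : v - w ≤ 0 := by linarith
    have h1 : (1:ℝ) ≤ lam ^ (v - w) :=
      Real.one_le_rpow_of_pos_of_le_one_of_nonpos hlam0 hl1.le hvw0
    have hNc : 1 ≤ N * c := by
      have hNc' : N * c = 2 * c + 2 / lam ^ T := by
        rw [hNdef]; field_simp
      have h3 : (2:ℝ) ≤ 2 / lam ^ T := by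
        rw [le_div_iff₀ hTpos]; nlinarith
      linarith
    have hlamv : lam ^ (-v) = Real.exp (v * c) := by
      rw [Real.rpow_def_of_pos hlam0, Real.exp_eq_exp]
      simp only [hc]; ring
    have hexp : v * c ≤ lam ^ (-v) - 1 := by
      rw [hlamv]
      have := Real.add_one_le_exp (v * c); linarith
    have hmul : lam ^ (v - w) * lam ^ (-v) = lam ^ (-w) := by
      rw [← Real.rpow_add hlam0]; ring_nf
    have step1 : v ≤ N * (v * c) := by nlinarith
    have step2 : N * (v * c) ≤ N * (lam ^ (-v) - 1) :=
      mul_le_mul_of_nonneg_left hexp hN0.le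
    have hnn : 0 ≤ lam ^ (-v) - 1 := by nlinarith
    have step3 : N * (lam ^ (-v) - 1) ≤ N * lam ^ (v - w) * (lam ^ (-v) - 1) := by
      nlinarith
    nlinarith [step1, step2, step3, hmul]
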